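/- arXiv:2209.09377 — 4 statements merged into one kernel-verified Lean document; each statement's English description precedes it below -/
import Mathlib

section
/- Let p ≥ 1 be a real number and k := ⌈p⌉. There exist constants C_p > 0 and C_p' > 0 depending only on p with the following property. Let (u_j^{(n)})_{n∈ℕ}, for j = 1, …, k−1, be sequences of real numbers with u_j^{(n)} → 0 as n → ∞ for each j. Then there exists N such that for every n > N there exist a positive integer q_n and a real random variable ξ^{(n)} with finite absolute moments of every order such that: (i) E[ξ^{(n)}] = 0 and E[(ξ^{(n)})²] = 1; (ii) κ_{j+2}(ξ^{(n)}) = q_n^{j/2} u_j^{(n)} for every j = 1, …, k−1; (iii) either max_{1≤j≤k−1} |κ_{j+2}(ξ^{(n)})| = 0 or max_{1≤j≤k−1} |κ_{j+2}(ξ^{(n)})| ≥ C_p; (iv) E|ξ^{(n)}|^{p+2} ≤ C_p'. Moreover, the integers q_n can be chosen so that q_n → ∞ as n → ∞. -/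
open MeasureTheory ProbabilityTheory Filter
open scoped Classical

noncomputable section

/-- The cumulants determined recursively from a sequence of moments via
`μ_m = ∑_{j=1}^m binom(m-1, j-1) κ_j μ_{m-j}`. -/
def cumulantAux (mom : ℕ → ℝ) : ℕ → ℝ
  | 0 => 0
  | m + 1 =>
    mom (m + 1) -
      ∑ j ∈ (Finset.range m).attach,
        (m.choose j.1 : ℝ) * cumulantAux mom (j.1 + 1) * mom (m - j.1)
decreasing_by
  have h := j.2
  simp only [Finset.mem_range] at h
  omega

/-- The `n`-th cumulant `κ_n(Y)` of a real random variable `Y`. -/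
def cumulant {Ω : Type*} [MeasurableSpace Ω] (μ : Measure Ω) (Y : Ω → ℝ) (n : ℕ) : ℝ :=
  cumulantAux (fun s => ∫ x, Y x ^ s ∂μ) n

/-!
Perturb the standard Gaussian `γ` to `dμ_c = (1 + e^{-x²} ∑_{i ≤ d} c_i x^i) dγ`. Its moments of
order `≤ d` are those of `γ` plus `H c`, where `H = (∫ x^{i+j} e^{-x²} dγ)_{i,j}` is a Gram matrix
of linearly independent monomials, hence invertible. Moments and cumulants determine each other
polynomially, so every cumulant vector close to the Gaussian one `(0, 1, 0, …, 0)` is realised by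
`μ_c` with `c = H⁻¹(moments − Gaussian moments)` small; then `e^{-x²} ∑ c_i x^i` is uniformly
small, so `μ_c` is a probability measure with `μ_c ≤ 2γ`, which bounds all its absolute moments.

The scale `q_n` is the least integer `q` at which some `q^{j/2} |u_j^{(n)}|` reaches `C_p`.
Passing from `q - 1` to `q ≤ 2(q - 1)` multiplies each rescaled entry by at most `2^K`, so all
rescaled cumulants stay below `2^K C_p = δ`; and since `u^{(n)} → 0` this least integer tends to
infinity.
-/

open Real Finset Matrix
open scoped ENNReal NNReal

lemma cumulantAux_succ (mom : ℕ → ℝ) (m : ℕ) :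
    cumulantAux mom (m + 1) =
      mom (m + 1) -
        ∑ j ∈ range m, (m.choose j : ℝ) * cumulantAux mom (j + 1) * mom (m - j) := by
  rw [cumulantAux, ← sum_attach (range m)]

lemma cumulantAux_congr {mom₁ mom₂ : ℕ → ℝ} {m : ℕ}
    (h : ∀ i ∈ Icc 1 m, mom₁ i = mom₂ i) : cumulantAux mom₁ m = cumulantAux mom₂ m := by
  induction m using Nat.strong_induction_on with
  | _ m ih =>
    cases m with
    | zero => simp [cumulantAux]
    | succ m =>
      rw [cumulantAux_succ, cumulantAux_succ, h (m + 1) (by simp)]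
      congr 1
      refine sum_congr rfl fun j hj => ?_
      have hj : j < m := mem_range.mp hj
      rw [ih (j + 1) (by omega) fun i hi => h i (by simp at hi ⊢; omega),
        h (m - j) (by simp; omega)]

section Cumulant

variable {Ω : Type*} [MeasurableSpace Ω] (μ : Measure Ω) (Y : Ω → ℝ)

lemma cumulant_one : cumulant μ Y 1 = ∫ x, Y x ∂μ := by
  rw [cumulant, cumulantAux_succ, range_zero, sum_empty, sub_zero, zero_add]
  simp only [pow_one]

lemma cumulant_two : cumulant μ Y 2 = ∫ x, Y x ^ 2 ∂μ - (∫ x, Y x ∂μ) ^ 2 := by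
  have h1 := cumulant_one μ Y
  rw [cumulant] at h1
  rw [cumulant, cumulantAux_succ, sum_range_one, zero_add, h1]
  simp [sq]

end Cumulant

def momentsOfCumulants (κ : ℕ → ℝ) : ℕ → ℝ
  | 0 => 1
  | m + 1 =>
    ∑ j ∈ range (m + 1), (m.choose j : ℝ) * κ (j + 1) * momentsOfCumulants κ (m - j)

lemma momentsOfCumulants_succ (κ : ℕ → ℝ) (m : ℕ) :
    momentsOfCumulants κ (m + 1) =
      ∑ j ∈ range (m + 1), (m.choose j : ℝ) * κ (j + 1) * momentsOfCumulants κ (m - j) := by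
  rw [momentsOfCumulants]

lemma cumulantAux_momentsOfCumulants (κ : ℕ → ℝ) {m : ℕ} (hm : 1 ≤ m) :
    cumulantAux (momentsOfCumulants κ) m = κ m := by
  induction m using Nat.strong_induction_on with
  | _ m ih =>
    obtain ⟨m, rfl⟩ := Nat.exists_eq_add_of_le' hm
    have hlower :
        ∑ j ∈ range m, (m.choose j : ℝ) * cumulantAux (momentsOfCumulants κ) (j + 1) *
          momentsOfCumulants κ (m - j) =
        ∑ j ∈ range m, (m.choose j : ℝ) * κ (j + 1) * momentsOfCumulants κ (m - j) :=
      sum_congr rfl fun j hj => by rw [ih (j + 1) (by simp at hj; omega) (by omega)]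
    rw [cumulantAux_succ, hlower, momentsOfCumulants_succ, sum_range_succ]
    simp [momentsOfCumulants]

lemma continuous_momentsOfCumulants {X : Type*} [TopologicalSpace X] {κ : X → ℕ → ℝ}
    (hκ : ∀ i, Continuous fun x => κ x i) (m : ℕ) :
    Continuous fun x => momentsOfCumulants (κ x) m := by
  induction m using Nat.strong_induction_on with
  | _ m ih =>
    cases m with
    | zero => simpa [momentsOfCumulants] using continuous_const
    | succ m =>
      simp only [momentsOfCumulants_succ]
      exact continuous_finsetSum _ fun j _ =>
        (continuous_const.mul (hκ _)).mul (ih _ (by omega))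

section Gaussian

variable {μ : ℝ} {v : ℝ≥0}

lemma integrable_abs_rpow_gaussianReal {r : ℝ} (hr : 0 ≤ r) :
    Integrable (fun x => |x| ^ r) (gaussianReal μ v) := by
  simpa [Real.coe_toNNReal _ hr] using
    (memLp_id_gaussianReal (μ := μ) (v := v) r.toNNReal).integrable_norm_rpow'

lemma integrable_pow_gaussianReal (k : ℕ) : Integrable (fun x => x ^ k) (gaussianReal μ v) := by
  refine (integrable_norm_iff (by fun_prop)).mp ?_
  simpa using (memLp_id_gaussianReal (μ := μ) (v := v) k).integrable_norm_pow'

lemma integrable_pow_mul_exp_neg_sq_gaussianReal (k : ℕ) :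
    Integrable (fun x => x ^ k * exp (-x ^ 2)) (gaussianReal μ v) :=
  (integrable_pow_gaussianReal k).mono (by fun_prop) (ae_of_all _ fun x => by
    rw [norm_mul, norm_of_nonneg (exp_pos _).le]
    exact mul_le_of_le_one_right (norm_nonneg _) (exp_le_one_iff.mpr (by nlinarith)))

end Gaussian

lemma hasDerivAt_gaussianPDFReal_zero_one (x : ℝ) :
    HasDerivAt (gaussianPDFReal 0 1) (-x * gaussianPDFReal 0 1 x) x := by
  simp only [gaussianPDFReal_def, NNReal.coe_one, mul_one, sub_zero]
  have h : HasDerivAt (fun y => (√(2 * π))⁻¹ * rexp (-y ^ 2 / 2))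
      ((√(2 * π))⁻¹ * (rexp (-x ^ 2 / 2) * (-(2 * x) / 2))) x := by
    simpa using ((hasDerivAt_pow 2 x).neg.div_const 2).exp.const_mul (√(2 * π))⁻¹
  exact h.congr_deriv (by ring)

lemma integrable_pow_mul_gaussianPDFReal_zero_one (k : ℕ) :
    Integrable fun x => x ^ k * gaussianPDFReal 0 1 x := by
  have h := (integrable_rpow_mul_exp_neg_mul_sq (b := 1 / 2) (by norm_num)
    (s := k) (by linarith [k.cast_nonneg (α := ℝ)])).const_mul (√(2 * π))⁻¹
  refine h.congr (ae_of_all _ fun x => ?_)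
  simp only [gaussianPDFReal_def, Real.rpow_natCast, NNReal.coe_one, mul_one, sub_zero]
  ring_nf

lemma integral_pow_add_two_gaussianReal_zero_one (k : ℕ) :
    ∫ x, x ^ (k + 2) ∂gaussianReal 0 1 = (k + 1) * ∫ x, x ^ k ∂gaussianReal 0 1 := by
  simp only [integral_gaussianReal_eq_integral_smul one_ne_zero, smul_eq_mul]
  have hparts := integral_mul_deriv_eq_deriv_mul_of_integrable
    (u := fun x => x ^ (k + 1)) (u' := fun x => (k + 1 : ℝ) * x ^ k)
    (v := gaussianPDFReal 0 1) (v' := fun x => -x * gaussianPDFReal 0 1 x)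
    (fun x _ => by simpa using hasDerivAt_pow (k + 1) x)
    (fun x _ => hasDerivAt_gaussianPDFReal_zero_one x)
    (((integrable_pow_mul_gaussianPDFReal_zero_one (k + 2)).neg).congr
      (ae_of_all _ fun x => by simp only [Pi.mul_apply, Pi.neg_apply]; ring))
    (((integrable_pow_mul_gaussianPDFReal_zero_one k).const_mul (k + 1)).congr
      (ae_of_all _ fun x => by simp only [Pi.mul_apply]; ring))
    (integrable_pow_mul_gaussianPDFReal_zero_one (k + 1))
  calc ∫ x, gaussianPDFReal 0 1 x * x ^ (k + 2)
      = -∫ x, x ^ (k + 1) * (-x * gaussianPDFReal 0 1 x) := by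
        rw [← integral_neg]; congr 1; funext x; ring
    _ = (k + 1) * ∫ x, gaussianPDFReal 0 1 x * x ^ k := by
        rw [hparts, neg_neg, ← integral_const_mul]; congr 1; funext x; ring

def stdGaussianCumulant (m : ℕ) : ℝ := if m = 2 then 1 else 0

lemma momentsOfCumulants_stdGaussianCumulant (m : ℕ) :
    momentsOfCumulants stdGaussianCumulant m = ∫ x, x ^ m ∂gaussianReal 0 1 := by
  induction m using Nat.strong_induction_on with
  | _ m ih =>
    match m with
    | 0 => simp [momentsOfCumulants]
    | 1 => simp [momentsOfCumulants_succ, stdGaussianCumulant, integral_id_gaussianReal]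
    | k + 2 =>
      rw [momentsOfCumulants_succ, sum_eq_single 1, integral_pow_add_two_gaussianReal_zero_one,
        ← ih k (by omega)]
      · simp [stdGaussianCumulant]
      · intro j _ hj
        simp [stdGaussianCumulant, show j + 1 ≠ 2 by omega]
      · simp

section MomentMatrix

variable (ν : Measure ℝ) (w : ℝ → ℝ) (d : ℕ)

def weightedMomentMatrix : Matrix (Fin (d + 1)) (Fin (d + 1)) ℝ :=
  Matrix.of fun i j => ∫ x, x ^ (i + j : ℕ) * w x ∂ν

variable {ν w d}

lemma weightedMomentMatrix_apply (i j : Fin (d + 1)) :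
    weightedMomentMatrix ν w d i j = ∫ x, x ^ (i + j : ℕ) * w x ∂ν := rfl

variable (hw : ∀ k : ℕ, Integrable (fun x => x ^ k * w x) ν)
include hw

lemma integrable_monomial_mul_monomial_mul (a b : ℝ) (i j : ℕ) :
    Integrable (fun x => a * x ^ i * (b * x ^ j) * w x) ν :=
  ((hw (i + j)).const_mul (a * b)).congr (ae_of_all _ fun x => by simp only [pow_add]; ring)

lemma integrable_sq_sum_monomial_mul (c : Fin (d + 1) → ℝ) :
    Integrable (fun x => (∑ i, c i * x ^ (i : ℕ)) ^ 2 * w x) ν := by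
  simp_rw [sq, sum_mul_sum, sum_mul]
  exact integrable_finsetSum _ fun i _ => integrable_finsetSum _ fun j _ =>
    integrable_monomial_mul_monomial_mul hw _ _ _ _

lemma dotProduct_weightedMomentMatrix_mulVec (c : Fin (d + 1) → ℝ) :
    c ⬝ᵥ (weightedMomentMatrix ν w d *ᵥ c) = ∫ x, (∑ i, c i * x ^ (i : ℕ)) ^ 2 * w x ∂ν := by
  simp_rw [sq, sum_mul_sum, sum_mul]
  rw [integral_finsetSum _ fun i _ => integrable_finsetSum _ fun j _ =>
    integrable_monomial_mul_monomial_mul hw _ _ _ _]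
  refine sum_congr rfl fun i _ => ?_
  rw [Matrix.mulVec, dotProduct, mul_sum,
    integral_finsetSum _ fun j _ => integrable_monomial_mul_monomial_mul hw _ _ _ _]
  refine sum_congr rfl fun j _ => ?_
  rw [weightedMomentMatrix_apply, mul_comm _ (c j), ← mul_assoc, ← integral_const_mul]
  congr 1; funext x; rw [pow_add]; ring

lemma isUnit_weightedMomentMatrix [ν.IsOpenPosMeasure] (hw_cont : Continuous w)
    (hw_pos : ∀ x, 0 < w x) : IsUnit (weightedMomentMatrix ν w d) := by
  refine Matrix.mulVec_injective_iff_isUnit.mp fun a b hab => sub_eq_zero.mp ?_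
  set c := a - b
  have hker : c ⬝ᵥ (weightedMomentMatrix ν w d *ᵥ c) = 0 := by
    simp [c, Matrix.mulVec_sub, hab]
  have hcont : Continuous fun x => (∑ i, c i * x ^ (i : ℕ)) ^ 2 * w x := by fun_prop
  rw [dotProduct_weightedMomentMatrix_mulVec hw,
    integral_eq_zero_iff_of_nonneg (fun x => mul_nonneg (sq_nonneg _) (hw_pos x).le)
      (integrable_sq_sum_monomial_mul hw c),
    hcont.ae_eq_iff_eq ν continuous_zero] at hker
  have hroot (x : ℝ) : (∑ i, Polynomial.C (c i) * Polynomial.X ^ (i : ℕ)).eval x = 0 := by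
    simpa [Polynomial.eval_finsetSum, (hw_pos x).ne'] using congrFun hker x
  have hpoly := Polynomial.funext (q := 0) (by simpa using hroot)
  funext i
  simpa [Polynomial.finsetSum_coeff, Polynomial.coeff_C_mul, Polynomial.coeff_X_pow,
    Fin.val_eq_val] using congrArg (Polynomial.coeff · i) hpoly

end MomentMatrix

lemma isUnit_weightedMomentMatrix_gaussianReal (d : ℕ) :
    IsUnit (weightedMomentMatrix (gaussianReal 0 1) (fun x => exp (-x ^ 2)) d) :=
  haveI := (gaussianReal_absolutelyContinuous' 0 one_ne_zero).isOpenPosMeasure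
  isUnit_weightedMomentMatrix integrable_pow_mul_exp_neg_sq_gaussianReal (by fun_prop)
    fun _ => exp_pos _

lemma abs_pow_mul_exp_neg_sq_le (k : ℕ) (x : ℝ) : |x| ^ k * exp (-x ^ 2) ≤ k.factorial := by
  rcases le_total |x| 1 with hx | hx
  · calc |x| ^ k * exp (-x ^ 2) ≤ 1 * 1 :=
          mul_le_mul (pow_le_one₀ (abs_nonneg x) hx) (exp_le_one_iff.mpr (by nlinarith))
            (by positivity) zero_le_one
      _ = 1 := one_mul 1
      _ ≤ k.factorial := Nat.one_le_cast.mpr k.factorial_pos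
  · have hpow : |x| ^ k ≤ (x ^ 2) ^ k := by
      rw [← sq_abs, ← pow_mul]
      exact pow_le_pow_right₀ hx (by omega)
    have hexp : (x ^ 2) ^ k ≤ k.factorial * exp (x ^ 2) := by
      have := pow_div_factorial_le_exp (x ^ 2) (sq_nonneg x) k
      rwa [div_le_iff₀ (by positivity), mul_comm] at this
    calc |x| ^ k * exp (-x ^ 2) ≤ k.factorial * exp (x ^ 2) * exp (-x ^ 2) := by
          gcongr; exact hpow.trans hexp
      _ = k.factorial := by rw [mul_assoc, ← exp_add]; simp

section PerturbedGaussian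

variable {d : ℕ} (c : Fin (d + 1) → ℝ)

def gaussianPerturbation (x : ℝ) : ℝ := exp (-x ^ 2) * ∑ i, c i * x ^ (i : ℕ)

def perturbedGaussian : Measure ℝ :=
  (gaussianReal 0 1).withDensity fun x => ENNReal.ofReal (1 + gaussianPerturbation c x)

lemma continuous_gaussianPerturbation : Continuous (gaussianPerturbation c) := by
  unfold gaussianPerturbation; fun_prop

lemma abs_gaussianPerturbation_le (x : ℝ) :
    |gaussianPerturbation c x| ≤ d.factorial * ∑ i, |c i| := by
  rw [gaussianPerturbation, mul_sum, mul_sum]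
  refine (abs_sum_le_sum_abs _ _).trans (sum_le_sum fun i _ => ?_)
  have hfact : ((i : ℕ).factorial : ℝ) ≤ d.factorial := by
    exact_mod_cast Nat.factorial_le (Nat.lt_succ_iff.mp i.isLt)
  calc |exp (-x ^ 2) * (c i * x ^ (i : ℕ))| = |c i| * (|x| ^ (i : ℕ) * exp (-x ^ 2)) := by
        rw [abs_mul, abs_mul, abs_pow, abs_of_pos (exp_pos _)]; ring
    _ ≤ |c i| * d.factorial :=
        mul_le_mul_of_nonneg_left ((abs_pow_mul_exp_neg_sq_le _ x).trans hfact) (abs_nonneg _)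
    _ = d.factorial * |c i| := mul_comm _ _

lemma integral_one_add_gaussianPerturbation_mul_pow (j : Fin (d + 1)) :
    ∫ x, (1 + gaussianPerturbation c x) * x ^ (j : ℕ) ∂gaussianReal 0 1 =
      ∫ x, x ^ (j : ℕ) ∂gaussianReal 0 1 +
        (weightedMomentMatrix (gaussianReal 0 1) (fun x => exp (-x ^ 2)) d *ᵥ c) j := by
  have hterm (i : Fin (d + 1)) : Integrable
      (fun x => c i * (x ^ (j + i : ℕ) * exp (-x ^ 2))) (gaussianReal 0 1) :=
    (integrable_pow_mul_exp_neg_sq_gaussianReal _).const_mul _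
  have hsplit : (fun x => (1 + gaussianPerturbation c x) * x ^ (j : ℕ)) =
      fun x => x ^ (j : ℕ) + ∑ i, c i * (x ^ (j + i : ℕ) * exp (-x ^ 2)) := by
    funext x
    simp only [gaussianPerturbation, add_mul, one_mul, sum_mul, mul_sum, pow_add]
    congr 1
    exact sum_congr rfl fun i _ => by ring
  rw [hsplit, integral_add (integrable_pow_gaussianReal _)
    (integrable_finsetSum _ fun i _ => hterm i), integral_finsetSum _ fun i _ => hterm i,
    Matrix.mulVec, dotProduct]
  congr 1
  refine sum_congr rfl fun i _ => ?_
  rw [integral_const_mul, weightedMomentMatrix_apply, mul_comm]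

variable {c} (hc : d.factorial * ∑ i, |c i| ≤ 1)
include hc

lemma one_add_gaussianPerturbation_mem_Icc (x : ℝ) :
    1 + gaussianPerturbation c x ∈ Set.Icc 0 2 := by
  have := abs_le.mp ((abs_gaussianPerturbation_le c x).trans hc)
  constructor <;> linarith [this.1, this.2]

lemma perturbedGaussian_le : perturbedGaussian c ≤ (2 : ℝ≥0∞) • gaussianReal 0 1 := by
  rw [← withDensity_const]
  refine withDensity_mono (ae_of_all _ fun x => ?_)
  rw [← ENNReal.ofReal_ofNat 2]
  exact ENNReal.ofReal_le_ofReal (one_add_gaussianPerturbation_mem_Icc hc x).2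

lemma integral_perturbedGaussian (f : ℝ → ℝ) :
    ∫ x, f x ∂perturbedGaussian c =
      ∫ x, (1 + gaussianPerturbation c x) * f x ∂gaussianReal 0 1 := by
  rw [perturbedGaussian, integral_withDensity_eq_integral_toReal_smul
    ((continuous_gaussianPerturbation c).const_add 1).measurable.ennreal_ofReal
    (ae_of_all _ fun _ => ENNReal.ofReal_lt_top)]
  refine integral_congr_ae (ae_of_all _ fun x => ?_)
  dsimp only
  rw [ENNReal.toReal_ofReal (one_add_gaussianPerturbation_mem_Icc hc x).1, smul_eq_mul]

lemma isProbabilityMeasure_perturbedGaussian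
    (h0 : (weightedMomentMatrix (gaussianReal 0 1) (fun x => exp (-x ^ 2)) d *ᵥ c) 0 = 0) :
    IsProbabilityMeasure (perturbedGaussian c) := by
  have hmass := integral_one_add_gaussianPerturbation_mul_pow c 0
  simp only [Fin.val_zero, pow_zero, mul_one, h0, add_zero, integral_const, probReal_univ,
    smul_eq_mul] at hmass
  have hint : Integrable (fun x => 1 + gaussianPerturbation c x) (gaussianReal 0 1) :=
    (integrable_const 1).add (Integrable.of_bound
      (continuous_gaussianPerturbation c).aestronglyMeasurable _
      (ae_of_all _ (abs_gaussianPerturbation_le c)))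
  constructor
  rw [perturbedGaussian, withDensity_apply _ MeasurableSet.univ, Measure.restrict_univ,
    ← ofReal_integral_eq_lintegral_ofReal hint
      (ae_of_all _ fun x => (one_add_gaussianPerturbation_mem_Icc hc x).1), hmass,
    ENNReal.ofReal_one]

end PerturbedGaussian

section MomentCorrection

variable (d : ℕ) (κ : ℕ → ℝ)

def momentCorrection : Fin (d + 1) → ℝ :=
  (weightedMomentMatrix (gaussianReal 0 1) (fun x => exp (-x ^ 2)) d)⁻¹ *ᵥ
    fun j => momentsOfCumulants κ j - ∫ x, x ^ (j : ℕ) ∂gaussianReal 0 1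

lemma weightedMomentMatrix_mulVec_momentCorrection :
    weightedMomentMatrix (gaussianReal 0 1) (fun x => exp (-x ^ 2)) d *ᵥ momentCorrection d κ =
      fun j : Fin (d + 1) => momentsOfCumulants κ j - ∫ x, x ^ (j : ℕ) ∂gaussianReal 0 1 := by
  rw [momentCorrection, Matrix.mulVec_mulVec, Matrix.mul_nonsing_inv _
    ((Matrix.isUnit_iff_isUnit_det _).mp (isUnit_weightedMomentMatrix_gaussianReal d)),
    Matrix.one_mulVec]

lemma momentCorrection_stdGaussianCumulant : momentCorrection d stdGaussianCumulant = 0 := by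
  have hdefect : (fun j : Fin (d + 1) => momentsOfCumulants stdGaussianCumulant j -
      ∫ x, x ^ (j : ℕ) ∂gaussianReal 0 1) = 0 := by
    funext j; simp [momentsOfCumulants_stdGaussianCumulant]
  rw [momentCorrection, hdefect, Matrix.mulVec_zero]

lemma continuous_momentCorrection {X : Type*} [TopologicalSpace X] {f : X → ℕ → ℝ}
    (hf : ∀ i, Continuous fun x => f x i) : Continuous fun x => momentCorrection d (f x) :=
  continuous_const.matrix_mulVec
    (continuous_pi fun j => (continuous_momentsOfCumulants hf j).sub continuous_const)

variable {d κ} (hc : d.factorial * ∑ i, |momentCorrection d κ i| ≤ 1)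
include hc

lemma integral_pow_perturbedGaussian_momentCorrection {j : ℕ} (hj : j ≤ d) :
    ∫ x, x ^ j ∂perturbedGaussian (momentCorrection d κ) = momentsOfCumulants κ j := by
  have h := integral_one_add_gaussianPerturbation_mul_pow (momentCorrection d κ)
    ⟨j, Nat.lt_succ_of_le hj⟩
  rw [weightedMomentMatrix_mulVec_momentCorrection] at h
  rw [integral_perturbedGaussian hc, h, add_sub_cancel]

lemma isProbabilityMeasure_perturbedGaussian_momentCorrection :
    IsProbabilityMeasure (perturbedGaussian (momentCorrection d κ)) := by
  refine isProbabilityMeasure_perturbedGaussian hc ?_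
  simp [weightedMomentMatrix_mulVec_momentCorrection, momentsOfCumulants]

lemma cumulant_perturbedGaussian_momentCorrection {m : ℕ} (hm : m ∈ Icc 1 d) :
    cumulant (perturbedGaussian (momentCorrection d κ)) (fun x => x) m = κ m := by
  rw [mem_Icc] at hm
  rw [cumulant, cumulantAux_congr fun i hi =>
    integral_pow_perturbedGaussian_momentCorrection hc (by rw [mem_Icc] at hi; omega),
    cumulantAux_momentsOfCumulants _ hm.1]

end MomentCorrection

theorem exists_cumulant_eq_of_near_stdGaussianCumulant (d : ℕ) :
    ∃ δ > 0, ∀ κ : ℕ → ℝ, (∀ m ∈ Icc 1 d, |κ m - stdGaussianCumulant m| ≤ δ) →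
      ∃ μ : Measure ℝ, IsProbabilityMeasure μ ∧ μ ≤ (2 : ℝ≥0∞) • gaussianReal 0 1 ∧
        ∀ m ∈ Icc 1 d, cumulant μ (fun x => x) m = κ m := by
  -- continuity is taken on the finite-dimensional space of shifts in the orders `1, …, d`
  let shift : (Fin d → ℝ) → ℕ → ℝ := fun w m =>
    stdGaussianCumulant m + if h : 1 ≤ m ∧ m ≤ d then w ⟨m - 1, by omega⟩ else 0
  have hshift (m : ℕ) : Continuous fun w => shift w m := by
    dsimp only [shift]; split <;> fun_prop
  have hshift0 : shift 0 = stdGaussianCumulant := by funext m; simp [shift]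
  let size : (Fin d → ℝ) → ℝ := fun w =>
    d.factorial * ∑ i, |momentCorrection d (shift w) i|
  have hsize : Continuous size := by
    have := continuous_momentCorrection d hshift
    fun_prop
  have hsize0 : size 0 = 0 := by simp [size, hshift0, momentCorrection_stdGaussianCumulant]
  obtain ⟨δ, hδ, hsmall⟩ := Metric.continuousAt_iff.mp hsize.continuousAt 1 one_pos
  refine ⟨δ / 2, by positivity, fun κ hκ => ?_⟩
  let w : Fin d → ℝ := fun i => κ (i + 1) - stdGaussianCumulant (i + 1)
  have hw (m : ℕ) (hm : m ∈ Icc 1 d) : shift w m = κ m := by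
    rw [mem_Icc] at hm
    simp [shift, w, hm, Nat.sub_add_cancel hm.1]
  have hc : size w ≤ 1 := by
    have hdist : dist w 0 < δ := by
      refine lt_of_le_of_lt ((dist_pi_le_iff (by positivity)).mpr fun i => ?_) (half_lt_self hδ)
      simpa [w, Real.dist_eq] using hκ (i + 1) (by simp)
    have := hsmall hdist
    rw [hsize0, Real.dist_eq, sub_zero] at this
    exact (le_abs_self _).trans this.le
  refine ⟨perturbedGaussian (momentCorrection d (shift w)),
    isProbabilityMeasure_perturbedGaussian_momentCorrection hc, perturbedGaussian_le hc,
    fun m hm => ?_⟩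
  rw [cumulant_perturbedGaussian_momentCorrection hc hm, hw m hm]

lemma integral_le_toReal_mul_of_le_smul {α : Type*} [MeasurableSpace α] {μ ν : Measure α}
    {a : ℝ≥0∞} (ha : a ≠ ∞) (hle : μ ≤ a • ν) {f : α → ℝ} (hf : 0 ≤ f) (hfi : Integrable f ν) :
    ∫ x, f x ∂μ ≤ a.toReal * ∫ x, f x ∂ν := by
  rw [← smul_eq_mul, ← integral_smul_measure]
  exact integral_mono_measure hle (ae_of_all _ hf) (hfi.smul_measure ha)

def rescaledCumulants (q : ℕ) (w : ℕ → ℝ) (m : ℕ) : ℝ :=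
  if m ≤ 2 then stdGaussianCumulant m else (q : ℝ) ^ (((m - 2 : ℕ) : ℝ) / 2) * w (m - 2)

lemma rescaledCumulants_add_two (q : ℕ) (w : ℕ → ℝ) {j : ℕ} (hj : 1 ≤ j) :
    rescaledCumulants q w (j + 2) = (q : ℝ) ^ ((j : ℝ) / 2) * w j := by
  simp [rescaledCumulants, show ¬j + 2 ≤ 2 by omega]

lemma abs_rescaledCumulants_sub_le {K q : ℕ} {w : ℕ → ℝ} {δ : ℝ} (hδ : 0 ≤ δ)
    (hw : ∀ j, 1 ≤ j → j ≤ K → (q : ℝ) ^ ((j : ℝ) / 2) * |w j| ≤ δ) :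
    ∀ m ∈ Icc 1 (K + 2), |rescaledCumulants q w m - stdGaussianCumulant m| ≤ δ := by
  intro m hm
  rw [mem_Icc] at hm
  by_cases hm2 : m ≤ 2
  · simp [rescaledCumulants, hm2, hδ]
  obtain ⟨j, rfl⟩ : ∃ j, m = j + 2 := ⟨m - 2, by omega⟩
  rw [rescaledCumulants_add_two q w (by omega), stdGaussianCumulant, if_neg (by omega), sub_zero,
    abs_mul, abs_of_nonneg (by positivity)]
  exact hw j (by omega) (by omega)

lemma rpow_div_two_le_pow {q : ℝ} (hq : 1 ≤ q) {j K : ℕ} (hjK : j ≤ K) :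
    q ^ ((j : ℝ) / 2) ≤ q ^ K := by
  rw [← Real.rpow_natCast]
  refine Real.rpow_le_rpow_of_exponent_le hq ?_
  have : (j : ℝ) ≤ K := by exact_mod_cast hjK
  linarith [(j.cast_nonneg : (0 : ℝ) ≤ j)]

lemma exists_nat_le_rpow_div_two_mul {a : ℝ} (ha : 0 < a) (c : ℝ) {j : ℕ} (hj : 1 ≤ j) :
    ∃ m : ℕ, c ≤ (m : ℝ) ^ ((j : ℝ) / 2) * a := by
  obtain ⟨m, hm⟩ := exists_nat_gt ((max c 0 / a) ^ 2)
  have hm1 : (1 : ℝ) ≤ m := by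
    have : 0 < m := by exact_mod_cast (by positivity : (0 : ℝ) ≤ (max c 0 / a) ^ 2).trans_lt hm
    exact_mod_cast this
  refine ⟨m, (le_max_left c 0).trans ((div_le_iff₀ ha).mp ?_)⟩
  calc max c 0 / a = √((max c 0 / a) ^ 2) := (sqrt_sq (by positivity)).symm
    _ ≤ √m := sqrt_le_sqrt hm.le
    _ = (m : ℝ) ^ ((1 : ℝ) / 2) := sqrt_eq_rpow _
    _ ≤ (m : ℝ) ^ ((j : ℝ) / 2) := by
      refine Real.rpow_le_rpow_of_exponent_le hm1 ?_
      have : (1 : ℝ) ≤ j := by exact_mod_cast hj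
      linarith

lemma exists_nat_scale_of_ne_zero {K : ℕ} {c : ℝ} (hc : 0 < c) {w : ℕ → ℝ}
    (hsmall : ∀ j, 1 ≤ j → j ≤ K → |w j| ≤ c) (hne : ∃ j, 1 ≤ j ∧ j ≤ K ∧ w j ≠ 0) :
    ∃ q : ℕ, 0 < q ∧
      (∀ j, 1 ≤ j → j ≤ K → (q : ℝ) ^ ((j : ℝ) / 2) * |w j| ≤ 2 ^ K * c) ∧
      ∃ j, 1 ≤ j ∧ j ≤ K ∧ c ≤ (q : ℝ) ^ ((j : ℝ) / 2) * |w j| := by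
  have hP : ∃ m : ℕ, ∃ j, 1 ≤ j ∧ j ≤ K ∧ c ≤ (m : ℝ) ^ ((j : ℝ) / 2) * |w j| := by
    obtain ⟨j, hj1, hjK, hj⟩ := hne
    obtain ⟨m, hm⟩ := exists_nat_le_rpow_div_two_mul (abs_pos.mpr hj) c hj1
    exact ⟨m, j, hj1, hjK, hm⟩
  have hpos : 0 < Nat.find hP := by
    obtain ⟨j, hj1, -, hj⟩ := Nat.find_spec hP
    refine Nat.pos_of_ne_zero fun h0 => ?_
    rw [h0, Nat.cast_zero, Real.zero_rpow (by positivity), zero_mul] at hj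
    exact hc.not_ge hj
  refine ⟨Nat.find hP, hpos, fun j hj1 hjK => ?_, Nat.find_spec hP⟩
  rcases Nat.lt_or_ge (Nat.find hP) 2 with hq | hq
  · rw [show Nat.find hP = 1 by omega, Nat.cast_one, one_rpow, one_mul]
    exact (hsmall j hj1 hjK).trans (le_mul_of_one_le_left hc.le (one_le_pow₀ one_le_two))
  have hmin := Nat.find_min hP (show Nat.find hP - 1 < Nat.find hP by omega)
  push Not at hmin
  have hlt := hmin j hj1 hjK
  set q := Nat.find hP
  rw [Nat.cast_pred hpos] at hlt
  have hq2 : (2 : ℝ) ≤ q := by exact_mod_cast hq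
  calc (q : ℝ) ^ ((j : ℝ) / 2) * |w j| ≤ (2 * ((q : ℝ) - 1)) ^ ((j : ℝ) / 2) * |w j| := by
        gcongr; linarith
    _ = (2 : ℝ) ^ ((j : ℝ) / 2) * (((q : ℝ) - 1) ^ ((j : ℝ) / 2) * |w j|) := by
        rw [Real.mul_rpow zero_le_two (by linarith)]; ring
    _ ≤ 2 ^ K * c :=
        mul_le_mul (rpow_div_two_le_pow one_le_two hjK) hlt.le
          (mul_nonneg (Real.rpow_nonneg (by linarith) _) (abs_nonneg _)) (by positivity)

lemma lt_of_le_rpow_div_two_mul {K M Q j : ℕ} {a c : ℝ} (hc : 0 < c) (hQ : 0 < Q) (hjK : j ≤ K)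
    (hle : c ≤ (Q : ℝ) ^ ((j : ℝ) / 2) * a) (hlt : a < c / ((M : ℝ) + 1) ^ K) : M < Q := by
  have hQ1 : (1 : ℝ) ≤ Q := by exact_mod_cast hQ
  have ha : 0 ≤ a := by
    by_contra! ha
    linarith [mul_neg_of_pos_of_neg (by positivity : (0 : ℝ) < (Q : ℝ) ^ ((j : ℝ) / 2)) ha]
  have hupper : c ≤ (Q : ℝ) ^ K * a :=
    hle.trans (mul_le_mul_of_nonneg_right (rpow_div_two_le_pow hQ1 hjK) ha)
  have hlower : a * ((M : ℝ) + 1) ^ K < c := (lt_div_iff₀ (by positivity)).mp hlt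
  have hpow : ((M : ℝ) + 1) ^ K < (Q : ℝ) ^ K := by
    refine lt_of_mul_lt_mul_right ?_ hc.le
    calc ((M : ℝ) + 1) ^ K * c ≤ ((M : ℝ) + 1) ^ K * ((Q : ℝ) ^ K * a) := by gcongr
      _ = (Q : ℝ) ^ K * (a * ((M : ℝ) + 1) ^ K) := by ring
      _ < (Q : ℝ) ^ K * c := by gcongr
  have := lt_of_pow_lt_pow_left₀ K (by positivity) hpow
  exact_mod_cast (show (M : ℝ) < Q by linarith)

theorem exists_scales_of_tendsto_zero (K : ℕ) {c : ℝ} (hc : 0 < c) (u : ℕ → ℕ → ℝ)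
    (hu : ∀ j, 1 ≤ j → j ≤ K → Tendsto (fun n => u j n) atTop (nhds 0)) :
    ∃ (N : ℕ) (q : ℕ → ℕ), Tendsto q atTop atTop ∧ ∀ n > N, 0 < q n ∧
      (∀ j, 1 ≤ j → j ≤ K → (q n : ℝ) ^ ((j : ℝ) / 2) * |u j n| ≤ 2 ^ K * c) ∧
      ((∀ j, 1 ≤ j → j ≤ K → u j n = 0) ∨
        ∃ j, 1 ≤ j ∧ j ≤ K ∧ c ≤ (q n : ℝ) ^ ((j : ℝ) / 2) * |u j n|) := by
  have hsmall (ε : ℝ) (hε : 0 < ε) : ∀ᶠ n in atTop, ∀ j, 1 ≤ j → j ≤ K → |u j n| < ε := by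
    have : ∀ᶠ n in atTop, ∀ j ∈ Icc 1 K, |u j n| < ε :=
      (eventually_all_finset _).mpr fun j hj => by
        rw [mem_Icc] at hj
        simpa using (hu j hj.1 hj.2).abs.eventually (gt_mem_nhds (by simpa using hε))
    exact this.mono fun n hn j h1 h2 => hn j (mem_Icc.mpr ⟨h1, h2⟩)
  obtain ⟨N, hN⟩ := eventually_atTop.mp (hsmall c hc)
  have hN' (n : ℕ) (hn : N ≤ n) (j : ℕ) (h1 : 1 ≤ j) (h2 : j ≤ K) : |u j n| ≤ c :=
    (hN n hn j h1 h2).le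
  choose! Q hQ using fun n (h : (∀ j, 1 ≤ j → j ≤ K → |u j n| ≤ c) ∧
    ∃ j, 1 ≤ j ∧ j ≤ K ∧ u j n ≠ 0) => exists_nat_scale_of_ne_zero hc h.1 h.2
  let q : ℕ → ℕ := fun n => if ∀ j, 1 ≤ j → j ≤ K → u j n = 0 then n + 1 else Q n
  refine ⟨N, q, tendsto_atTop.mpr fun M => ?_, fun n hn => ?_⟩
  · filter_upwards [eventually_ge_atTop (max M N), hsmall (c / (M + 1) ^ K) (by positivity)]
      with n hn hu'
    dsimp only [q]
    split_ifs with hzero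
    · omega
    push Not at hzero
    obtain ⟨hQpos, -, j, hj1, hjK, hj⟩ := hQ n ⟨hN' n (le_of_max_le_right hn), hzero⟩
    exact (lt_of_le_rpow_div_two_mul hc hQpos hjK hj (hu' j hj1 hjK)).le
  · dsimp only [q]
    split_ifs with hzero
    · exact ⟨n.succ_pos, fun j h1 h2 => by simp [hzero j h1 h2]; positivity, Or.inl hzero⟩
    · push Not at hzero
      obtain ⟨hpos, hbound, hbig⟩ := hQ n ⟨hN' n hn.le, hzero⟩
      exact ⟨hpos, hbound, Or.inr hbig⟩

/-- Lemma 6.3 (cumulant matching): existence of an i.i.d. proxy distribution with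
prescribed cumulants. -/
theorem cumulant_matching (p : ℝ) (hp : 1 ≤ p) :
    ∃ Cp Cp' : ℝ, 0 < Cp ∧ 0 < Cp' ∧
      ∀ u : ℕ → ℕ → ℝ,
        (∀ j : ℕ, 1 ≤ j → j ≤ ⌈p⌉₊ - 1 → Tendsto (fun n => u j n) atTop (nhds 0)) →
        ∃ (N : ℕ) (q : ℕ → ℕ) (law : ℕ → Measure ℝ),
          Tendsto q atTop atTop ∧
          ∀ n > N,
            0 < q n ∧
            IsProbabilityMeasure (law n) ∧
            (∀ s : ℕ, Integrable (fun x : ℝ => |x| ^ s) (law n)) ∧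
            (∫ x : ℝ, x ∂(law n)) = 0 ∧
            (∫ x : ℝ, x ^ 2 ∂(law n)) = 1 ∧
            (∀ j : ℕ, 1 ≤ j → j ≤ ⌈p⌉₊ - 1 →
              cumulant (law n) (fun x => x) (j + 2) = (q n : ℝ) ^ ((j : ℝ) / 2) * u j n) ∧
            ((∀ j : ℕ, 1 ≤ j → j ≤ ⌈p⌉₊ - 1 → cumulant (law n) (fun x => x) (j + 2) = 0) ∨
              (∃ j : ℕ, 1 ≤ j ∧ j ≤ ⌈p⌉₊ - 1 ∧
                Cp ≤ |cumulant (law n) (fun x => x) (j + 2)|)) ∧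
            (∫ x : ℝ, |x| ^ (p + 2) ∂(law n)) ≤ Cp' := by

  set K := ⌈p⌉₊ - 1
  obtain ⟨δ, hδ, hlaw⟩ := exists_cumulant_eq_of_near_stdGaussianCumulant (K + 2)
  refine ⟨δ / 2 ^ K, 1 + 2 * ∫ x, |x| ^ (p + 2) ∂gaussianReal 0 1, by positivity,
    by positivity, fun u hu => ?_⟩
  obtain ⟨N, q, hq, hqn⟩ := exists_scales_of_tendsto_zero K (c := δ / 2 ^ K) (by positivity) u hu
  choose! law hlaw using fun n (hn : n > N) =>
    hlaw (rescaledCumulants (q n) (u · n)) (abs_rescaledCumulants_sub_le hδ.le fun j h1 h2 =>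
      ((hqn n hn).2.1 j h1 h2).trans_eq (by field_simp))
  refine ⟨N, q, law, hq, fun n hn => ?_⟩
  obtain ⟨hprob, hle, hcum⟩ := hlaw n hn
  obtain ⟨hqpos, -, hdichotomy⟩ := hqn n hn
  have hcum' (j : ℕ) (h1 : 1 ≤ j) (h2 : j ≤ K) :
      cumulant (law n) (fun x => x) (j + 2) = (q n : ℝ) ^ ((j : ℝ) / 2) * u j n := by
    rw [hcum (j + 2) (by simp; omega), rescaledCumulants_add_two _ _ h1]
  have hmean : ∫ x, x ∂law n = 0 := by
    simpa [cumulant_one, rescaledCumulants, stdGaussianCumulant] using hcum 1 (by simp)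
  have hvar : ∫ x, x ^ 2 ∂law n = 1 := by
    simpa [cumulant_two, hmean, rescaledCumulants, stdGaussianCumulant] using hcum 2 (by simp)
  refine ⟨hqpos, hprob, fun s => ?_, hmean, hvar, hcum', ?_, ?_⟩
  · have hs := integrable_abs_rpow_gaussianReal (μ := 0) (v := 1) (Nat.cast_nonneg s)
    simp only [Real.rpow_natCast] at hs
    exact (hs.smul_measure (by simp)).mono_measure hle
  · refine hdichotomy.imp (fun hzero j h1 h2 => ?_) fun ⟨j, h1, h2, hbig⟩ => ⟨j, h1, h2, ?_⟩
    · rw [hcum' j h1 h2, hzero j h1 h2, mul_zero]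
    · rwa [hcum' j h1 h2, abs_mul, abs_of_nonneg (by positivity)]
  · have hbound := integral_le_toReal_mul_of_le_smul (by simp) hle (fun x => by positivity)
      (integrable_abs_rpow_gaussianReal (μ := 0) (v := 1) (by linarith : 0 ≤ p + 2))
    simp only [ENNReal.toReal_ofNat] at hbound
    linarith

end
end

section
/- For every integer j ≥ 1, the function P_j(x) := L_j(0, 1, x, x², …, x^{2j−2}), where L_j(x_1,…,x_{2j}) := H_j(1, B_1(x_1), B_2(x_1,x_2), …, B_{2j}(x_1,…,x_{2j})), is a polynomial in x of degree at most j(j−1) containing only even-degree terms; moreover, for every integer j ≥ 2 its constant term P_j(0) satisfies P_j(0) ≥ 2. -/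
open MeasureTheory ProbabilityTheory Filter
open scoped Classical

noncomputable section

/-- Partial exponential Bell polynomial `B_{n,j}(x₁,…,x_{n-j+1})`. -/
def bellPartial (n j : ℕ) (x : ℕ → ℝ) : ℝ :=
  ∑ i ∈ Finset.univ.filter (fun i : Fin (n - j + 1) → Fin (j + 1) =>
      (∑ a : Fin (n - j + 1), ((i a : ℕ))) = j ∧
        (∑ a : Fin (n - j + 1), ((a : ℕ) + 1) * (i a : ℕ)) = n),
    (n.factorial : ℝ) / (∏ a : Fin (n - j + 1), (((i a : ℕ)).factorial : ℝ)) *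
      ∏ a : Fin (n - j + 1), (x ((a : ℕ) + 1) / (((a : ℕ) + 1).factorial : ℝ)) ^ ((i a : ℕ))

/-- Complete exponential Bell polynomial `B_n(x₁,…,x_n)`. -/
def bellComplete (n : ℕ) (x : ℕ → ℝ) : ℝ := ∑ j ∈ Finset.Icc 1 n, bellPartial n j x

/-- Hankel determinant `H_j(x₀,…,x_{2j})`: the determinant of the `(j+1) × (j+1)` matrix
whose `(a,b)` entry is `x_{a+b}`. -/
def hankel (j : ℕ) (x : ℕ → ℝ) : ℝ :=
  Matrix.det (Matrix.of fun a b : Fin (j + 1) => x ((a : ℕ) + (b : ℕ)))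

/-- `L_j(x₁,…,x_{2j}) = H_j(1, B₁(x₁), …, B_{2j}(x₁,…,x_{2j}))`. -/
def Lfun (j : ℕ) (x : ℕ → ℝ) : ℝ :=
  hankel j fun m => if m = 0 then 1 else bellComplete m x

/-- `P_j(x) = L_j(0, 1, x, x², …, x^{2j-2})`. -/
def Pfun (j : ℕ) (x : ℝ) : ℝ :=
  Lfun j fun m => if m = 1 then 0 else x ^ (m - 2)

/-!
Write `E_m(x) = B_m(0, 1, x, x², …, x^{m-2})` (and `E_0 = 1`), so that `P_j = det (E_{a+b})`.
A monomial of `B_{m,k}` has `k` factors of total weight `m`; since `x_1 = 0` and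
`x_{a+1} = x^{a-1}` otherwise, it becomes a multiple of `x^{m-2k}`. Hence `E_m` is a polynomial of
degree at most `m - 2` with the parity of `m`. The determinant then has degree at most
`2 ∑_{a ≤ j} (a - 1)₊ = j (j - 1)`, and it is even because
`E_{a+b}(-x) = (-1)^a (-1)^b E_{a+b}(x)` only changes the signs of rows and columns.

At `x = 0` only `B_{m,m/2}` survives, and `E_m(0) = μ_m` is the number of perfect matchings of
`m` points (the `m`-th moment of the standard Gaussian). Splitting matchings gives
`μ_{a+b} = ∑_k C(a,k) C(b,k) k! μ_{a-k} μ_{b-k}`, an `L D Lᵀ` factorization of the moment Hankel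
matrix with `L` unitriangular and `D = diag(k!)`, so `P_j(0) = ∏_{k ≤ j} k!`, which is at least `2`
once `j ≥ 2`.
-/

open Finset Polynomial Nat

theorem Polynomial.coeff_eq_zero_of_odd_of_eval_neg {R : Type*} [CommRing R] [IsDomain R]
    [CharZero R] {p : R[X]} (hp : ∀ x, p.eval (-x) = p.eval x) {m : ℕ} (hm : Odd m) :
    p.coeff m = 0 := by
  have hcomp : p.comp (C (-1) * X) = p := Polynomial.funext fun x => by simp [hp]
  have hcoeff := congr_arg (coeff · m) hcomp
  simp only [comp_C_mul_X_coeff, hm.neg_one_pow, mul_neg_one] at hcoeff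
  exact self_eq_neg.1 hcoeff.symm

theorem Matrix.natDegree_det_le {n R : Type*} [Fintype n] [DecidableEq n] [CommRing R]
    (M : Matrix n n R[X]) (d e : n → ℕ) (h : ∀ i k, (M i k).natDegree ≤ d i + e k) :
    M.det.natDegree ≤ ∑ i, d i + ∑ k, e k := by
  rw [Matrix.det_apply']
  refine natDegree_sum_le_of_forall_le _ _ fun σ _ => natDegree_mul_le.trans ?_
  rw [natDegree_intCast, zero_add]
  calc (∏ i, M (σ i) i).natDegree ≤ ∑ i, (M (σ i) i).natDegree := natDegree_prod_le _ _
    _ ≤ ∑ i, (d (σ i) + e i) := sum_le_sum fun i _ => h _ _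
    _ = _ := by rw [sum_add_distrib, Equiv.sum_comp σ d]

theorem Nat.choose_succ_mul_factorial_succ (b k : ℕ) :
    b.choose (k + 1) * (k + 1)! = b * ((b - 1).choose k * k !) := by
  cases b with
  | zero => simp
  | succ n =>
    rw [factorial_succ, add_tsub_cancel_right, ← mul_assoc, ← mul_assoc, ← add_one_mul_choose_eq]

theorem Nat.monotone_superFactorial : Monotone superFactorial :=
  monotone_nat_of_le_succ fun _ => le_mul_of_one_le_left' (factorial_pos _)

theorem sum_sub_one_mul_add_two_mul_sum {N : ℕ} (c : Fin N → ℕ)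
    (h0 : ∀ a : Fin N, (a : ℕ) = 0 → c a = 0) :
    ∑ a : Fin N, ((a : ℕ) - 1) * c a + 2 * ∑ a, c a = ∑ a : Fin N, ((a : ℕ) + 1) * c a := by
  rw [mul_sum, ← sum_add_distrib]
  refine sum_congr rfl fun a _ => ?_
  obtain ha | ⟨d, hd⟩ : (a : ℕ) = 0 ∨ ∃ d, (a : ℕ) = d + 1 := by
    rcases (a : ℕ) with _ | d <;> simp
  · simp [h0 a ha]
  · rw [hd, add_tsub_cancel_right]
    ring

def gaussianMoment : ℕ → ℕ
  | 0 => 1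
  | 1 => 0
  | n + 2 => (n + 1) * gaussianMoment n

theorem gaussianMoment_succ (n : ℕ) : gaussianMoment (n + 1) = n * gaussianMoment (n - 1) := by
  cases n <;> rfl

theorem gaussianMoment_odd (k : ℕ) : gaussianMoment (2 * k + 1) = 0 := by
  induction k with
  | zero => rfl
  | succ k ih => rw [show 2 * (k + 1) + 1 = 2 * k + 1 + 2 by ring, gaussianMoment, ih, mul_zero]

theorem gaussianMoment_two_mul (k : ℕ) :
    gaussianMoment (2 * k) * (k ! * 2 ^ k) = (2 * k)! := by
  induction k with
  | zero => rfl
  | succ k ih =>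
    rw [show 2 * (k + 1) = 2 * k + 2 by ring, gaussianMoment, factorial_succ, factorial_succ,
      factorial_succ, ← ih]
    ring

theorem gaussianMoment_succ_add (a b : ℕ) :
    gaussianMoment (a + 1 + b) =
      a * gaussianMoment (a - 1 + b) + b * gaussianMoment (a + (b - 1)) := by
  rcases a with _ | a
  · simp [add_comm 1 b, gaussianMoment_succ]
  rcases b with _ | b
  · simp [gaussianMoment_succ]
  rw [show a + 1 + 1 + (b + 1) = a + b + 2 + 1 by ring, gaussianMoment_succ,
    show a + 1 - 1 + (b + 1) = a + b + 1 by omega, show a + 1 + (b + 1 - 1) = a + b + 1 by omega,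
    show a + b + 2 - 1 = a + b + 1 by omega]
  ring

theorem choose_mul_gaussianMoment_add_one_sub (a k : ℕ) :
    a.choose k * gaussianMoment (a + 1 - k) =
      a * ((a - 1).choose k * gaussianMoment (a - 1 - k)) := by
  rcases lt_trichotomy k a with hk | rfl | hk
  · obtain ⟨d, rfl⟩ : ∃ d, a = k + d + 1 := ⟨a - k - 1, by omega⟩
    rw [show k + d + 1 + 1 - k = d + 2 by omega, show k + d + 1 - 1 - k = d by omega,
      gaussianMoment, show k + d + 1 - 1 = k + d by omega]
    have h := Nat.choose_mul_succ_eq (k + d) k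
    rw [show k + d + 1 - k = d + 1 by omega] at h
    rw [← mul_assoc, ← h]
    ring
  · cases k <;> simp [gaussianMoment]
  · simp [choose_eq_zero_of_lt hk, choose_eq_zero_of_lt (show a - 1 < k by omega)]

/-- Splitting the perfect matchings of `a + b` points according to the number `k` of pairs that
join the first `a` points to the last `b`. -/
theorem gaussianMoment_add (a b : ℕ) :
    gaussianMoment (a + b) = ∑ k ∈ range (a + 1),
      a.choose k * b.choose k * k ! * gaussianMoment (a - k) * gaussianMoment (b - k) := by
  induction a using Nat.strong_induction_on generalizing b with
  | _ a ih =>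
  rcases a with _ | a
  · simp [gaussianMoment]
  -- Pascal's rule on `choose (a + 1) k`; the two halves give the two terms of
  -- `gaussianMoment_succ_add`.
  have hsplit := sum_choose_succ_mul (R := ℕ)
    (fun k r => b.choose k * k ! * gaussianMoment r * gaussianMoment (b - k)) a
  simp only [Nat.cast_id] at hsplit
  have hfirst : ∑ k ∈ range (a + 1), a.choose k *
      (b.choose k * k ! * gaussianMoment (a + 1 - k) * gaussianMoment (b - k))
      = a * gaussianMoment (a - 1 + b) := by
    simp_rw [show ∀ k, a.choose k *
        (b.choose k * k ! * gaussianMoment (a + 1 - k) * gaussianMoment (b - k))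
        = (a.choose k * gaussianMoment (a + 1 - k)) * (b.choose k * k ! * gaussianMoment (b - k))
        from fun k => by ring, choose_mul_gaussianMoment_add_one_sub, mul_assoc, ← mul_sum]
    rcases a with _ | a
    · simp
    rw [sum_range_succ, choose_eq_zero_of_lt (by omega), zero_mul, add_zero,
      add_tsub_cancel_right, ih a (by omega)]
    congr 1
    exact sum_congr rfl fun k _ => by ring
  have hsecond : ∑ k ∈ range (a + 1), a.choose k *
      (b.choose (k + 1) * (k + 1)! * gaussianMoment (a - k) * gaussianMoment (b - (k + 1)))
      = b * gaussianMoment (a + (b - 1)) := by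
    rw [ih a (by omega), mul_sum]
    refine sum_congr rfl fun k _ => ?_
    rw [show b - (k + 1) = b - 1 - k by omega]
    calc _ = (b.choose (k + 1) * (k + 1)!) * (a.choose k * gaussianMoment (a - k) *
          gaussianMoment (b - 1 - k)) := by ring
      _ = _ := by rw [choose_succ_mul_factorial_succ]; ring
  rw [gaussianMoment_succ_add, ← hfirst, ← hsecond, ← hsplit]
  exact sum_congr rfl fun k _ => by ring

theorem hankel_gaussianMoment (j : ℕ) : hankel j (fun m => (gaussianMoment m : ℝ)) = sf j := by
  let L : Matrix (Fin (j + 1)) (Fin (j + 1)) ℝ :=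
    .of fun a k => (a : ℕ).choose k * gaussianMoment (a - k)
  have hL : L.det = 1 := by
    rw [Matrix.det_of_isLowerTriangular L fun a k hak => by
      simp [L, choose_eq_zero_of_lt (show (a : ℕ) < k from hak)]]
    simp [L, gaussianMoment]
  have hfactor : Matrix.of (fun a b : Fin (j + 1) => (gaussianMoment (a + b : ℕ) : ℝ))
      = L * Matrix.diagonal (fun k : Fin (j + 1) => ((k : ℕ)! : ℝ)) * L.transpose := by
    ext a b
    rw [Matrix.mul_apply]
    simp only [Matrix.mul_diagonal, Matrix.transpose_apply, Matrix.of_apply, L]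
    rw [gaussianMoment_add, Fin.sum_univ_eq_sum_range (fun k => ((a : ℕ).choose k *
      gaussianMoment (a - k) * k ! * ((b : ℕ).choose k * gaussianMoment (b - k)) : ℝ))]
    push_cast
    rw [sum_subset (range_subset_range.2 (show (a : ℕ) + 1 ≤ j + 1 by omega)) fun k _ hk => by
      simp [choose_eq_zero_of_lt (show (a : ℕ) < k by simp at hk; omega)]]
    exact sum_congr rfl fun k _ => by ring
  rw [hankel, hfactor, Matrix.det_mul, Matrix.det_mul, Matrix.det_transpose, hL,
    Matrix.det_diagonal, Fin.prod_univ_eq_prod_range (fun k => ((k ! : ℕ) : ℝ)), ← Nat.cast_prod,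
    prod_range_succ_factorial]
  ring

theorem hankel_neg_one_pow_mul (j : ℕ) (y : ℕ → ℝ) :
    hankel j (fun m => (-1) ^ m * y m) = hankel j y := by
  let v : Fin (j + 1) → ℝ := fun a => (-1) ^ (a : ℕ)
  have hsign : Matrix.of (fun a b : Fin (j + 1) => (-1) ^ ((a : ℕ) + b) * y (a + b)) =
      Matrix.of fun a b => v b * Matrix.of (fun a b => v a * Matrix.of (fun a b : Fin (j + 1) =>
        y (a + b)) a b) a b := by
    ext a b
    simp only [Matrix.of_apply, v, pow_add]
    ring
  rw [hankel, hankel, hsign, Matrix.det_mul_row, Matrix.det_mul_column, ← mul_assoc,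
    ← prod_mul_distrib]
  simp [v, ← mul_pow]

def bellIndices (n j : ℕ) : Finset (Fin (n - j + 1) → Fin (j + 1)) :=
  univ.filter fun i => ∑ a, (i a : ℕ) = j ∧ ∑ a : Fin (n - j + 1), ((a : ℕ) + 1) * (i a : ℕ) = n

def bellTerm (n : ℕ) (x : ℕ → ℝ) {N J : ℕ} (i : Fin N → Fin J) : ℝ :=
  (n ! : ℝ) / (∏ a, ((i a : ℕ)! : ℝ)) *
    ∏ a : Fin N, (x ((a : ℕ) + 1) / (((a : ℕ) + 1)! : ℝ)) ^ (i a : ℕ)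

theorem bellPartial_eq_sum_bellTerm (n j : ℕ) (x : ℕ → ℝ) :
    bellPartial n j x = ∑ i ∈ bellIndices n j, bellTerm n x i := rfl

theorem mem_bellIndices {n j : ℕ} {i : Fin (n - j + 1) → Fin (j + 1)} :
    i ∈ bellIndices n j ↔
      ∑ a, (i a : ℕ) = j ∧ ∑ a : Fin (n - j + 1), ((a : ℕ) + 1) * (i a : ℕ) = n := by
  simp [bellIndices]

theorem val_eq_zero_of_bellTerm_ne_zero {x : ℕ → ℝ} (hx : ∀ k, k ≠ 1 → x (k + 1) = 0)
    {n N J : ℕ} {i : Fin N → Fin J} (hi : bellTerm n x i ≠ 0) (a : Fin N) (ha : (a : ℕ) ≠ 1) :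
    (i a : ℕ) = 0 := by
  by_contra hia
  refine hi (mul_eq_zero_of_right _ (prod_eq_zero (mem_univ a) ?_))
  simp [hx a ha, hia]

theorem eq_two_mul_of_bellTerm_ne_zero {x : ℕ → ℝ} (hx : ∀ k, k ≠ 1 → x (k + 1) = 0)
    {n j : ℕ} {i : Fin (n - j + 1) → Fin (j + 1)}
    (hmem : i ∈ bellIndices n j) (hi : bellTerm n x i ≠ 0) : n = 2 * j := by
  obtain ⟨hsum, hweight⟩ := mem_bellIndices.1 hmem
  have hdouble : ∑ a : Fin (n - j + 1), ((a : ℕ) + 1) * (i a : ℕ) = 2 * ∑ a, (i a : ℕ) := by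
    rw [mul_sum]
    refine sum_congr rfl fun a _ => ?_
    by_cases ha : (a : ℕ) = 1
    · rw [ha]
    · rw [val_eq_zero_of_bellTerm_ne_zero hx hi a ha, mul_zero, mul_zero]
  omega

/-- Only the index with `j` parts of size two contributes. -/
theorem bellPartial_of_forall_ne_two {x : ℕ → ℝ} (hx : ∀ k, k ≠ 1 → x (k + 1) = 0)
    {n j : ℕ} (hj : 1 ≤ j) :
    bellPartial n j x = if n = 2 * j then (n ! : ℝ) / (j ! * 2 ^ j) * x 2 ^ j else 0 := by
  rw [bellPartial_eq_sum_bellTerm]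
  split_ifs with hn
  swap
  · exact sum_eq_zero fun i hmem => not_not.1 fun hi =>
      hn (eq_two_mul_of_bellTerm_ne_zero hx hmem hi)
  set a1 : Fin (n - j + 1) := ⟨1, by omega⟩
  set istar : Fin (n - j + 1) → Fin (j + 1) := Pi.single a1 (Fin.last j)
  have hon : (istar a1 : ℕ) = j := by simp [istar]
  have hoff : ∀ a, a ≠ a1 → (istar a : ℕ) = 0 := fun a ha => by simp [istar, ha]
  have hstar : istar ∈ bellIndices n j := by
    rw [mem_bellIndices, sum_eq_single_of_mem a1 (mem_univ _) fun a _ ha => hoff a ha,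
      sum_eq_single_of_mem a1 (mem_univ _) fun a _ ha => by rw [hoff a ha, mul_zero], hon]
    exact ⟨rfl, hn.symm⟩
  rw [sum_eq_single_of_mem istar hstar]
  · rw [bellTerm, prod_eq_single_of_mem a1 (mem_univ _) fun a _ ha => by
        rw [hoff a ha, factorial_zero, cast_one],
      prod_eq_single_of_mem a1 (mem_univ _) fun a _ ha => by rw [hoff a ha, pow_zero], hon]
    simp only [a1, reduceAdd, factorial_two, cast_ofNat, div_pow]
    field_simp
  · intro i hmem hne
    by_contra hi
    have hzero : ∀ a, a ≠ a1 → (i a : ℕ) = 0 := fun a ha =>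
      val_eq_zero_of_bellTerm_ne_zero hx hi a fun h => ha (Fin.ext h)
    have hsum := (mem_bellIndices.1 hmem).1
    rw [sum_eq_single_of_mem a1 (mem_univ _) fun a _ ha => hzero a ha] at hsum
    refine hne (funext fun a => Fin.ext ?_)
    by_cases ha : a = a1
    · rw [ha, hon, hsum]
    · rw [hoff a ha, hzero a ha]

def shiftedPowers (x : ℝ) (k : ℕ) : ℝ := if k = 1 then 0 else x ^ (k - 2)

theorem shiftedPowers_succ (x : ℝ) (a : ℕ) :
    shiftedPowers x (a + 1) = shiftedPowers 1 (a + 1) * x ^ (a - 1) := by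
  rcases a with _ | a <;> simp [shiftedPowers]

theorem shiftedPowers_zero_succ {k : ℕ} (hk : k ≠ 1) : shiftedPowers 0 (k + 1) = 0 := by
  rcases k with _ | _ | k <;> simp_all [shiftedPowers]

theorem bellTerm_shiftedPowers {n j : ℕ} {i : Fin (n - j + 1) → Fin (j + 1)}
    (hi : i ∈ bellIndices n j) (x : ℝ) :
    bellTerm n (shiftedPowers x) i =
      if 2 * j ≤ n then bellTerm n (shiftedPowers 1) i * x ^ (n - 2 * j) else 0 := by
  obtain ⟨hsum, hweight⟩ := mem_bellIndices.1 hi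
  simp only [bellTerm, shiftedPowers_succ x, div_eq_mul_inv, mul_right_comm _ (x ^ _), mul_pow,
    ← pow_mul, prod_mul_distrib, prod_pow_eq_pow_sum]
  by_cases h0 : (i 0 : ℕ) = 0
  · have hdeg := sum_sub_one_mul_add_two_mul_sum (fun a => (i a : ℕ))
      fun a ha => by rwa [show a = 0 from Fin.ext ha]
    rw [hsum, hweight] at hdeg
    rw [if_pos (by omega),
      show n - 2 * j = ∑ a : Fin (n - j + 1), ((a : ℕ) - 1) * (i a : ℕ) by omega]
    ring
  · have hzero : ∏ a : Fin (n - j + 1), (shiftedPowers 1 ((a : ℕ) + 1) ^ (i a : ℕ)) = 0 :=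
      prod_eq_zero (mem_univ 0) (by simp [shiftedPowers, h0])
    split_ifs <;> simp [hzero]

theorem bellPartial_shiftedPowers (n j : ℕ) (x : ℝ) :
    bellPartial n j (shiftedPowers x) =
      if 2 * j ≤ n then bellPartial n j (shiftedPowers 1) * x ^ (n - 2 * j) else 0 := by
  simp only [bellPartial_eq_sum_bellTerm]
  rw [sum_congr rfl fun i hi => bellTerm_shiftedPowers hi x]
  split_ifs <;> simp [sum_mul]

def hankelEntry (x : ℝ) (m : ℕ) : ℝ := if m = 0 then 1 else bellComplete m (shiftedPowers x)

theorem Pfun_eq_hankel (j : ℕ) (x : ℝ) : Pfun j x = hankel j (hankelEntry x) := rfl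

theorem hankelEntry_zero (m : ℕ) : hankelEntry 0 m = gaussianMoment m := by
  rcases eq_or_ne m 0 with rfl | hm
  · simp [hankelEntry, gaussianMoment]
  rw [hankelEntry, if_neg hm, bellComplete, sum_congr rfl fun j hj =>
    bellPartial_of_forall_ne_two (fun _ => shiftedPowers_zero_succ) (mem_Icc.1 hj).1]
  simp only [shiftedPowers, OfNat.ofNat_ne_one, if_false, tsub_self, pow_zero, one_pow, mul_one]
  obtain ⟨k, rfl | rfl⟩ := m.even_or_odd'
  · rw [sum_eq_single_of_mem k (mem_Icc.2 ⟨by omega, by omega⟩) fun j _ hj => if_neg (by omega),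
      if_pos rfl, ← gaussianMoment_two_mul k]
    push_cast
    field_simp
  · rw [sum_eq_zero fun j _ => if_neg (by omega), gaussianMoment_odd, cast_zero]

theorem hankelEntry_neg (x : ℝ) (m : ℕ) : hankelEntry (-x) m = (-1) ^ m * hankelEntry x m := by
  rcases eq_or_ne m 0 with rfl | hm
  · simp [hankelEntry]
  simp only [hankelEntry, if_neg hm, bellComplete, mul_sum]
  refine sum_congr rfl fun j _ => ?_
  rw [bellPartial_shiftedPowers m j (-x), bellPartial_shiftedPowers m j x]
  split_ifs with hj
  · obtain ⟨d, rfl⟩ : ∃ d, m = 2 * j + d := ⟨m - 2 * j, by omega⟩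
    rw [add_tsub_cancel_left, neg_pow, pow_add, pow_mul, neg_one_sq, one_pow]
    ring
  · simp

def hankelEntryPoly (m : ℕ) : ℝ[X] :=
  if m = 0 then 1 else ∑ j ∈ Icc 1 m,
    if 2 * j ≤ m then monomial (m - 2 * j) (bellPartial m j (shiftedPowers 1)) else 0

theorem eval_hankelEntryPoly (m : ℕ) (x : ℝ) : (hankelEntryPoly m).eval x = hankelEntry x m := by
  rcases eq_or_ne m 0 with rfl | hm
  · simp [hankelEntryPoly, hankelEntry]
  simp only [hankelEntryPoly, hankelEntry, if_neg hm, eval_finsetSum, bellComplete]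
  refine sum_congr rfl fun j _ => ?_
  rw [bellPartial_shiftedPowers m j x]
  split_ifs <;> simp

theorem natDegree_hankelEntryPoly_le (m : ℕ) : (hankelEntryPoly m).natDegree ≤ m - 2 := by
  unfold hankelEntryPoly
  split_ifs
  · simp
  refine natDegree_sum_le_of_forall_le _ _ fun j hj => ?_
  split_ifs
  · exact (natDegree_monomial_le _).trans (by grind)
  · simp

def hankelPoly (j : ℕ) : ℝ[X] := (Matrix.of fun a b : Fin (j + 1) => hankelEntryPoly (a + b)).det

theorem eval_hankelPoly (j : ℕ) (x : ℝ) : (hankelPoly j).eval x = Pfun j x := by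
  rw [hankelPoly, ← coe_evalRingHom, RingHom.map_det, Pfun_eq_hankel, hankel]
  congr 1
  ext a b
  simp [eval_hankelEntryPoly]

theorem natDegree_hankelPoly_le (j : ℕ) : (hankelPoly j).natDegree ≤ j * (j - 1) := by
  refine (Matrix.natDegree_det_le _ (fun a : Fin (j + 1) => (a : ℕ) - 1) (fun a => (a : ℕ) - 1)
    fun a b => (natDegree_hankelEntryPoly_le _).trans (by omega)).trans_eq ?_
  rw [← two_mul, Fin.sum_univ_eq_sum_range (· - 1), sum_range_succ', mul_comm,
    ← sum_range_id_mul_two]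
  simp

theorem Pfun_even_polynomial_general (j : ℕ) :
    ∃ Q : Polynomial ℝ, (∀ x : ℝ, Pfun j x = Q.eval x) ∧
      Q.natDegree ≤ j * (j - 1) ∧ (∀ m : ℕ, Odd m → Q.coeff m = 0) ∧
      (2 ≤ j → (2 : ℝ) ≤ Pfun j 0) := by
  refine ⟨hankelPoly j, fun x => (eval_hankelPoly j x).symm, natDegree_hankelPoly_le j,
    fun m hm => coeff_eq_zero_of_odd_of_eval_neg (fun x => ?_) hm, fun hj => ?_⟩
  · simp only [eval_hankelPoly, Pfun_eq_hankel, funext (hankelEntry_neg x),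
      hankel_neg_one_pow_mul]
  · rw [Pfun_eq_hankel, funext hankelEntry_zero, hankel_gaussianMoment]
    exact_mod_cast Nat.monotone_superFactorial hj

/-- Lemma 7.1: `P_j` is an even polynomial of degree at most `j(j-1)`, with constant term
at least `2` for `j ≥ 2`. -/
theorem Pfun_even_polynomial (j : ℕ) (hj : 1 ≤ j) :
    ∃ Q : Polynomial ℝ, (∀ x : ℝ, Pfun j x = Q.eval x) ∧
      Q.natDegree ≤ j * (j - 1) ∧ (∀ m : ℕ, Odd m → Q.coeff m = 0) ∧
      (2 ≤ j → (2 : ℝ) ≤ Pfun j 0) :=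
  Pfun_even_polynomial_general j

end
end

section
/- Let j ∈ ℕ₊ and C ≥ 1, and let μ_0 = 1, μ_1, …, μ_{2j+1} be real numbers with |μ_ℓ| ≤ C for ℓ = 1, …, 2j+1 and H_j(μ_0, μ_1, …, μ_{2j}) ≥ 1. Then, setting C' := (j+1)·(j+1)!·C^{j+2} + 1, one has H_{j+1}(μ_0, μ_1, …, μ_{2j+1}, C') ≥ 1. -/
open MeasureTheory ProbabilityTheory Filter
open scoped Classical

noncomputable section

/-- Lemma 7.2: extending a positive Hankel determinant by one more moment. -/
theorem hankel_extension (j : ℕ) (hj : 1 ≤ j) (C : ℝ) (hC : 1 ≤ C) (μ : ℕ → ℝ)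
    (h0 : μ 0 = 1) (hb : ∀ ℓ : ℕ, 1 ≤ ℓ → ℓ ≤ 2 * j + 1 → |μ ℓ| ≤ C)
    (hH : 1 ≤ hankel j μ) :
    1 ≤ hankel (j + 1) (fun m =>
      if m = 2 * j + 2 then ((j : ℝ) + 1) * ((j + 1).factorial : ℝ) * C ^ (j + 2) + 1
      else μ m) := by
  set C' : ℝ := ((j : ℝ) + 1) * ((j + 1).factorial : ℝ) * C ^ (j + 2) + 1 with hC'
  set x : ℕ → ℝ := fun m =>
    if m = 2 * j + 2 then C' else μ m with hx
  -- basic facts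
  have hC0 : (0:ℝ) ≤ C := le_trans zero_le_one hC
  have hμC : ∀ ℓ : ℕ, ℓ ≤ 2 * j + 1 → |μ ℓ| ≤ C := by
    intro ℓ hℓ
    rcases Nat.eq_zero_or_pos ℓ with h | h
    · simpa [h, h0, abs_one] using hC
    · exact hb ℓ h hℓ
  -- the big matrix
  set A : Matrix (Fin (j + 2)) (Fin (j + 2)) ℝ :=
    Matrix.of (fun a b : Fin (j + 2) => x ((a : ℕ) + (b : ℕ))) with hA
  have hhank : hankel (j + 1) x = A.det := rfl
  rw [hhank]
  -- Laplace expansion along last row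
  have hexp := Matrix.det_succ_row A (Fin.last (j+1))
  rw [Fin.sum_univ_castSucc] at hexp
  -- last term
  have hlast : (-1 : ℝ) ^ ((Fin.last (j+1) : ℕ) + ((Fin.last (j+1)) : ℕ)) *
      A (Fin.last (j+1)) (Fin.last (j+1)) *
      (A.submatrix (Fin.last (j+1)).succAbove (Fin.last (j+1)).succAbove).det
      = C' * hankel j μ := by
    have h1 : (-1 : ℝ) ^ ((Fin.last (j+1) : ℕ) + ((Fin.last (j+1)) : ℕ)) = 1 := by
      rw [Fin.val_last]; rw [← two_mul]; simp [pow_mul]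
    have h2 : A (Fin.last (j+1)) (Fin.last (j+1)) = C' := by
      simp [hA, hx, Fin.val_last]; ring_nf; simp
    have h3 : (A.submatrix (Fin.last (j+1)).succAbove (Fin.last (j+1)).succAbove).det
        = hankel j μ := by
      unfold hankel
      congr 1
      ext a b
      simp only [Matrix.submatrix_apply, hA, Matrix.of_apply, Fin.succAbove_last, hx,
        Fin.coe_castSucc]
      have : (a:ℕ) + (b:ℕ) ≠ 2 * j + 2 := by omega
      simp [this]
    rw [h1, h2, h3, one_mul]
  -- bound on each minor
  have hminor : ∀ b : Fin (j+1),
      |(A.submatrix (Fin.last (j+1)).succAbove (Fin.castSucc b).succAbove).det|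
        ≤ ((j+1).factorial : ℝ) * C ^ (j+1) := by
    intro b
    have hent : ∀ a c : Fin (j+1),
        |A.submatrix (Fin.last (j+1)).succAbove (Fin.castSucc b).succAbove a c| ≤ C := by
      intro a c
      simp only [Matrix.submatrix_apply, hA, Matrix.of_apply, Fin.succAbove_last, hx]
      have hlt : (((Fin.castSucc b).succAbove c : Fin (j+2)) : ℕ) < j + 2 :=
        ((Fin.castSucc b).succAbove c).isLt
      have halt : ((Fin.castSucc a : Fin (j+2)) : ℕ) = (a : ℕ) := rfl
      have h1 : ((Fin.castSucc a : Fin (j+2)) : ℕ) + (((Fin.castSucc b).succAbove c : Fin (j+2)) : ℕ) ≤ 2*j+1 := by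
        have := a.isLt; omega
      have h2 : ((Fin.castSucc a : Fin (j+2)) : ℕ) + (((Fin.castSucc b).succAbove c : Fin (j+2)) : ℕ) ≠ 2*j+2 := by omega
      rw [if_neg h2]
      exact hμC _ h1
    have := Matrix.det_le (A := A.submatrix (Fin.last (j+1)).succAbove (Fin.castSucc b).succAbove)
      (abv := (AbsoluteValue.abs : AbsoluteValue ℝ ℝ)) (x := C) hent
    simpa [Fintype.card_fin, nsmul_eq_mul] using this
  -- bound on each non-last term in the expansion
  have hterm : ∀ b : Fin (j+1),
      |(-1:ℝ)^((Fin.last (j+1):ℕ) + ((Fin.castSucc b : Fin (j+2)):ℕ)) *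
        A (Fin.last (j+1)) (Fin.castSucc b) *
        (A.submatrix (Fin.last (j+1)).succAbove (Fin.castSucc b).succAbove).det|
      ≤ ((j+1).factorial : ℝ) * C ^ (j+2) := by
    intro b
    rw [abs_mul, abs_mul, abs_pow, abs_neg, abs_one, one_pow, one_mul]
    have hAe : |A (Fin.last (j+1)) (Fin.castSucc b)| ≤ C := by
      simp only [hA, Matrix.of_apply, hx, Fin.val_last, Fin.coe_castSucc]
      have h2 : (j+1) + (b:ℕ) ≠ 2*j+2 := by have := b.isLt; omega
      rw [if_neg h2]
      exact hμC _ (by have := b.isLt; omega)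
    calc |A (Fin.last (j+1)) (Fin.castSucc b)| *
          |(A.submatrix (Fin.last (j+1)).succAbove (Fin.castSucc b).succAbove).det|
        ≤ C * (((j+1).factorial:ℝ) * C ^ (j+1)) :=
          mul_le_mul hAe (hminor b) (abs_nonneg _) hC0
      _ = ((j+1).factorial:ℝ) * C ^ (j+2) := by ring
  -- bound the sum of the non-last terms
  set S : ℝ := ∑ b : Fin (j+1), (-1:ℝ)^((Fin.last (j+1):ℕ) + ((Fin.castSucc b : Fin (j+2)):ℕ)) *
        A (Fin.last (j+1)) (Fin.castSucc b) *
        (A.submatrix (Fin.last (j+1)).succAbove (Fin.castSucc b).succAbove).det with hS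
  have hSbound : |S| ≤ ((j:ℝ)+1) * (((j+1).factorial:ℝ) * C ^ (j+2)) := by
    calc |S| ≤ ∑ b : Fin (j+1),
        |(-1:ℝ)^((Fin.last (j+1):ℕ) + ((Fin.castSucc b : Fin (j+2)):ℕ)) *
          A (Fin.last (j+1)) (Fin.castSucc b) *
          (A.submatrix (Fin.last (j+1)).succAbove (Fin.castSucc b).succAbove).det| :=
        Finset.abs_sum_le_sum_abs _ _
      _ ≤ ∑ _b : Fin (j+1), ((j+1).factorial:ℝ) * C ^ (j+2) :=
        Finset.sum_le_sum fun b _ => hterm b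
      _ = ((j:ℝ)+1) * (((j+1).factorial:ℝ) * C ^ (j+2)) := by
        rw [Finset.sum_const, Finset.card_univ, Fintype.card_fin, nsmul_eq_mul]
        push_cast; ring
  have hdet : A.det = S + C' * hankel j μ := by rw [hexp, hlast]
  have hC1 : 1 ≤ C' := by
    have h1 : (0:ℝ) ≤ ((j:ℝ)+1) * ((j+1).factorial:ℝ) * C ^ (j+2) := by positivity
    rw [hC']; linarith
  have hmul : C' ≤ C' * hankel j μ :=
    le_mul_of_one_le_right (le_trans zero_le_one hC1) hH
  have hnegS : -((( (j:ℝ)+1) * (((j+1).factorial:ℝ) * C ^ (j+2)))) ≤ S :=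
    le_trans (neg_le_neg hSbound) (neg_abs_le S)
  rw [hdet]
  have : C' - 1 = ((j:ℝ)+1) * (((j+1).factorial:ℝ) * C ^ (j+2)) := by rw [hC']; ring
  linarith

end
end

section
/- Let t ∈ ℕ₊, let Y_1, …, Y_t be real random variables, and let p_1, …, p_t > 1 be real numbers with 1/p_1 + ⋯ + 1/p_t = 1 and E|Y_i|^{p_i} < ∞ for each i. Then for every tuple of positive integers (η_1, …, η_ℓ) with η_1 + ⋯ + η_ℓ = t: [η_1, …, η_ℓ] ▷ (|Y_1|, …, |Y_t|) ≤ (1/p_1) E|Y_1|^{p_1} + ⋯ + (1/p_t) E|Y_t|^{p_t}. -/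
open MeasureTheory ProbabilityTheory Filter
open scoped Classical

noncomputable section

/-- Compositional expectation `[η₁,…,η_ℓ] ▷ (Y₀, Y₁, …)`:
the product over the blocks of the expectations of the products over each block. -/
def compExpect {Ω : Type*} [MeasurableSpace Ω] (μ : Measure Ω) : List ℕ → (ℕ → Ω → ℝ) → ℝ
  | [], _ => 1
  | a :: l, Y => (∫ x, ∏ i ∈ Finset.range a, Y i x ∂μ) * compExpect μ l (fun i => Y (i + a))

lemma blockHolder {Ω : Type} [MeasurableSpace Ω] (μ : Measure Ω) [IsProbabilityMeasure μ]
    (a : ℕ) (Y : ℕ → Ω → ℝ) (q : ℕ → ℝ) (hq : ∀ i, i < a → 0 < q i)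
    (hs : ∑ i ∈ Finset.range a, 1 / q i ≤ 1)
    (hmeas : ∀ i, i < a → Measurable (Y i))
    (hint : ∀ i, i < a → Integrable (fun x => |Y i x| ^ q i) μ) :
    ∫ x, ∏ i ∈ Finset.range a, |Y i x| ∂μ ≤
      ∏ i ∈ Finset.range a, (∫ x, |Y i x| ^ q i ∂μ) ^ (1 / q i) := by
  set f : ℕ → Ω → ENNReal := fun i x => ENNReal.ofReal (|Y i x| ^ q i) with hf
  have hqmem : ∀ i ∈ Finset.range a, 0 < q i := fun i hi => hq i (Finset.mem_range.mp hi)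
  have hmeasf : ∀ i ∈ Finset.range a, Measurable (f i) := fun i hi =>
    ((Real.continuous_rpow_const (hqmem i hi).le).measurable.comp
      (hmeas i (Finset.mem_range.mp hi)).abs).ennreal_ofReal
  have key := ENNReal.lintegral_mul_prod_norm_pow_le (μ := μ) (Finset.range a)
    (g := fun _ => (1 : ENNReal)) (f := f) aemeasurable_const
    (fun i hi => (hmeasf i hi).aemeasurable)
    (1 - ∑ i ∈ Finset.range a, 1 / q i) (by ring)
    (by linarith) (fun i hi => one_div_nonneg.mpr (hqmem i hi).le)
  -- simplify both sides of key
  have hL : ∀ x, (1 : ENNReal) ^ (1 - ∑ i ∈ Finset.range a, 1 / q i) *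
      ∏ i ∈ Finset.range a, f i x ^ (1 / q i)
      = ENNReal.ofReal (∏ i ∈ Finset.range a, |Y i x|) := by
    intro x
    rw [ENNReal.one_rpow, one_mul,
      ENNReal.ofReal_prod_of_nonneg (fun i _ => abs_nonneg _)]
    refine Finset.prod_congr rfl fun i hi => ?_
    rw [hf, ENNReal.ofReal_rpow_of_nonneg (Real.rpow_nonneg (abs_nonneg _) _)
        (one_div_nonneg.mpr (hqmem i hi).le),
      ← Real.rpow_mul (abs_nonneg _), mul_one_div_cancel (hqmem i hi).ne',
      Real.rpow_one]
  have hR : ∀ i ∈ Finset.range a, ∫⁻ x, f i x ∂μ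
      = ENNReal.ofReal (∫ x, |Y i x| ^ q i ∂μ) := fun i hi => by
    rw [hf, ← MeasureTheory.ofReal_integral_eq_lintegral_ofReal
      (hint i (Finset.mem_range.mp hi))
      (Filter.Eventually.of_forall fun x => Real.rpow_nonneg (abs_nonneg _) _)]
  simp only [hL] at key
  rw [lintegral_one, measure_univ, ENNReal.one_rpow, one_mul] at key
  rw [Finset.prod_congr rfl (fun i hi => by rw [hR i hi] : ∀ i ∈ Finset.range a, (∫⁻ x, f i x ∂μ) ^ (1 / q i) = (ENNReal.ofReal (∫ x, |Y i x| ^ q i ∂μ)) ^ (1 / q i))] at key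
  have hne : ∏ i ∈ Finset.range a,
      (ENNReal.ofReal (∫ x, |Y i x| ^ q i ∂μ)) ^ (1 / q i) ≠ ⊤ := by
    refine (ENNReal.prod_lt_top fun i hi => ?_).ne
    exact ENNReal.rpow_lt_top_of_nonneg (one_div_nonneg.mpr (hqmem i hi).le)
      ENNReal.ofReal_ne_top
  have hmeasP : Measurable fun x => ∏ i ∈ Finset.range a, |Y i x| :=
    Finset.measurable_prod _ fun i hi => (hmeas i (Finset.mem_range.mp hi)).abs
  rw [MeasureTheory.integral_eq_lintegral_of_nonneg_ae
      (Filter.Eventually.of_forall fun x => Finset.prod_nonneg fun i _ => abs_nonneg _)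
      hmeasP.aestronglyMeasurable]
  calc (∫⁻ x, ENNReal.ofReal (∏ i ∈ Finset.range a, |Y i x|) ∂μ).toReal
      ≤ (∏ i ∈ Finset.range a,
          (ENNReal.ofReal (∫ x, |Y i x| ^ q i ∂μ)) ^ (1 / q i)).toReal :=
        ENNReal.toReal_mono hne key
    _ = ∏ i ∈ Finset.range a, (∫ x, |Y i x| ^ q i ∂μ) ^ (1 / q i) := by
        rw [ENNReal.toReal_prod]
        refine Finset.prod_congr rfl fun i hi => ?_
        rw [← ENNReal.toReal_rpow, ENNReal.toReal_ofReal
          (integral_nonneg fun x => Real.rpow_nonneg (abs_nonneg _) _)]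

lemma compExpect_nonneg {Ω : Type*} [MeasurableSpace Ω] (μ : Measure Ω) :
    ∀ (η : List ℕ) (Y : ℕ → Ω → ℝ), (∀ i x, 0 ≤ Y i x) → 0 ≤ compExpect μ η Y
  | [], _, _ => by simp [compExpect]
  | a :: l, Y, h => by
    simp only [compExpect]
    exact mul_nonneg (integral_nonneg fun x => Finset.prod_nonneg fun i _ => h i x)
      (compExpect_nonneg μ l _ fun i x => h _ x)

lemma compExpect_le_prod {Ω : Type} [MeasurableSpace Ω] (μ : Measure Ω)
    [IsProbabilityMeasure μ] :
    ∀ (η : List ℕ) (Y : ℕ → Ω → ℝ) (q : ℕ → ℝ), (∀ i, i < η.sum → 0 < q i) →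
    (∑ i ∈ Finset.range η.sum, 1 / q i ≤ 1) →
    (∀ i, i < η.sum → Measurable (Y i)) →
    (∀ i, i < η.sum → Integrable (fun x => |Y i x| ^ q i) μ) →
    compExpect μ η (fun i x => |Y i x|) ≤
      ∏ i ∈ Finset.range η.sum, (∫ x, |Y i x| ^ q i ∂μ) ^ (1 / q i)
  | [], Y, q, _, _, _, _ => by simp [compExpect]
  | a :: l, Y, q, hq, hs, hm, hi => by
    have hsum : (a :: l).sum = a + l.sum := by simp
    have hblock : ∑ i ∈ Finset.range a, 1 / q i ≤ 1 := by
      refine le_trans ?_ hs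
      refine Finset.sum_le_sum_of_subset_of_nonneg
        (Finset.range_subset_range.mpr (by omega)) fun i hi _ => ?_
      exact one_div_nonneg.mpr (hq i (by rw [hsum]; exact Finset.mem_range.mp hi)).le
    have hsplit : ∑ i ∈ Finset.range (a + l.sum), 1 / q i
        = ∑ i ∈ Finset.range a, 1 / q i + ∑ i ∈ Finset.range l.sum, 1 / q (a + i) :=
      Finset.sum_range_add _ _ _
    have hblock0 : 0 ≤ ∑ i ∈ Finset.range a, 1 / q i :=
      Finset.sum_nonneg fun i hi =>
        one_div_nonneg.mpr (hq i (by rw [hsum]; have := Finset.mem_range.mp hi; omega)).le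
    have htail : ∑ i ∈ Finset.range l.sum, 1 / q (i + a) ≤ 1 := by
      have : ∑ i ∈ Finset.range l.sum, 1 / q (i + a)
          = ∑ i ∈ Finset.range l.sum, 1 / q (a + i) :=
        Finset.sum_congr rfl fun i _ => by rw [add_comm]
      rw [this]
      rw [hsum, hsplit] at hs
      linarith
    have h1 := blockHolder μ a Y q (fun i h => hq i (by rw [hsum]; omega))
      hblock (fun i h => hm i (by rw [hsum]; omega))
      (fun i h => hi i (by rw [hsum]; omega))
    have h2 := compExpect_le_prod μ l (fun i => Y (i + a)) (fun i => q (i + a))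
      (fun i h => hq (i + a) (by rw [hsum]; omega)) htail
      (fun i h => hm (i + a) (by rw [hsum]; omega))
      (fun i h => hi (i + a) (by rw [hsum]; omega))
    simp only [compExpect]
    calc (∫ x, ∏ i ∈ Finset.range a, |Y i x| ∂μ) *
          compExpect μ l (fun i x => |Y (i + a) x|)
        ≤ (∏ i ∈ Finset.range a, (∫ x, |Y i x| ^ q i ∂μ) ^ (1 / q i)) *
          ∏ i ∈ Finset.range l.sum,
            (∫ x, |Y (i + a) x| ^ q (i + a) ∂μ) ^ (1 / q (i + a)) := by
          refine mul_le_mul h1 h2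
            (compExpect_nonneg μ l _ fun i x => abs_nonneg _)
            (Finset.prod_nonneg fun i _ => Real.rpow_nonneg
              (integral_nonneg fun x => Real.rpow_nonneg (abs_nonneg _) _) _)
      _ = ∏ i ∈ Finset.range (a :: l).sum, (∫ x, |Y i x| ^ q i ∂μ) ^ (1 / q i) := by
          rw [hsum, Finset.prod_range_add]
          congr 1
          exact Finset.prod_congr rfl fun i _ => by rw [add_comm]

/-- Lemma 8.2 (generalized Young inequality for compositional expectations). -/
theorem compExpect_young {Ω : Type} [MeasurableSpace Ω] (μ : Measure Ω)
    [IsProbabilityMeasure μ] (t : ℕ) (ht : 1 ≤ t) (Y : ℕ → Ω → ℝ) (q : ℕ → ℝ)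
    (hq : ∀ i, i < t → 1 < q i) (hqsum : (∑ i ∈ Finset.range t, 1 / q i) = 1)
    (hmeas : ∀ i, i < t → Measurable (Y i))
    (hint : ∀ i, i < t → Integrable (fun x => |Y i x| ^ q i) μ)
    (η : List ℕ) (hpos : ∀ a ∈ η, 0 < a) (hsum : η.sum = t) :
    compExpect μ η (fun i x => |Y i x|) ≤
      ∑ i ∈ Finset.range t, (1 / q i) * ∫ x, |Y i x| ^ q i ∂μ := by
  subst hsum
  calc compExpect μ η (fun i x => |Y i x|)
      ≤ ∏ i ∈ Finset.range η.sum, (∫ x, |Y i x| ^ q i ∂μ) ^ (1 / q i) :=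
        compExpect_le_prod μ η Y q (fun i h => lt_trans one_pos (hq i h))
          hqsum.le hmeas hint
    _ ≤ ∑ i ∈ Finset.range η.sum, (1 / q i) * ∫ x, |Y i x| ^ q i ∂μ :=
        Real.geom_mean_le_arith_mean_weighted _ _ _
          (fun i hi => one_div_nonneg.mpr
            (lt_trans one_pos (hq i (Finset.mem_range.mp hi))).le)
          hqsum
          (fun i hi => integral_nonneg fun x => Real.rpow_nonneg (abs_nonneg _) _)

end
end
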